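/- arXiv:1702.03729 — 9 statements merged into one kernel-verified Lean document; each statement's English description precedes it below -/
import Mathlib

section
/- Let G be a linearly ordered group (a group with a linear order invariant under left and right multiplication) and S a finite nonempty subset of G. Then |S·S| ≥ 2|S| − 1, where S·S = {ab : a, b ∈ S}. -/
open Pointwise

theorem stmt0 {G : Type*} [Group G] [LinearOrder G]
    [CovariantClass G G (· * ·) (· ≤ ·)]
    [CovariantClass G G (Function.swap (· * ·)) (· ≤ ·)]
    (S : Finset G) (hS : S.Nonempty) :
    2 * S.card - 1 ≤ (S * S).card := by
  have := cauchy_davenport_mul_of_linearOrder_isCancelMul hS hS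
  omega
end

section
/- Let G be a linearly ordered group and S a finite subset of G with |S| = k ≥ 2. If |S·S| = 2|S| − 1, then there exist commuting elements x, y ∈ G such that S = {y, yx, yx², …, yx^{k−1}}, i.e., S is a geometric progression. -/
/-!
List `S` increasingly as `a₀ < a₁ < ⋯ < a_{k-1}`. For each `m ≤ k - 2` the three blocks
`a₀·{a₀, …, a_m}`, `a₁·{a_m, …, a_{k-1}}` and `{a₂, …, a_{k-1}}·a_{k-1}` of `S·S` lie strictly
one above the other and have `2k - 1` elements in total, so they exhaust `S·S`. Locating
`a₀a_{m+1}` among them forces `a₀a_{m+1} = a₁a_m`. With `x = a₀⁻¹a₁` this reads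
`a_{m+1} = x a_m`, and the case `m = 0` says that `x` commutes with `a₀`, so `a_m = a₀xᵐ`.
-/

open Pointwise Finset

theorem Fin.eq_mul_pow_of_succ_eq_mul {M : Type*} [Monoid M] {n : ℕ} {a : Fin (n + 1) → M}
    {x : M} (hx : Commute x (a 0)) (h : ∀ i : Fin n, a i.succ = x * a i.castSucc)
    (i : Fin (n + 1)) : a i = a 0 * x ^ (i : ℕ) := by
  induction i using Fin.induction with
  | zero => simp
  | succ i ih =>
    rw [h, ih, Fin.val_castSucc, ← mul_assoc, hx.eq, Fin.val_succ, pow_succ', mul_assoc]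

section OrderedGroup

variable {G : Type*} [Group G] [LinearOrder G] [MulLeftMono G] [MulRightMono G]
  {S : Finset G} {n : ℕ} (a : Fin (n + 2) ↪o G)

theorem mul_lt_mul_last {i j : Fin (n + 2)} (hij : i < j) (l : Fin (n + 2)) :
    a i * a l < a j * a (Fin.last _) :=
  calc a i * a l ≤ a i * a (Fin.last _) := mul_le_mul_right (a.monotone (Fin.le_last l)) _
    _ < a j * a (Fin.last _) := mul_lt_mul_left (a.strictMono hij) _

theorem image_union_image_union_image_eq_mul_self (ha : ∀ i, a i ∈ S)
    (hSS : #(S * S) ≤ 2 * n + 3) (m : Fin (n + 2)) :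
    (Iic m).image (a 0 * a ·) ∪ (Ici m).image (a 1 * a ·) ∪
      (Ioi 1).image (a · * a (Fin.last _)) = S * S := by
  have disjoint_of_lt {U V : Finset G} (h : ∀ u ∈ U, ∀ v ∈ V, u < v) : Disjoint U V :=
    disjoint_left.mpr fun _ hu hv => lt_irrefl _ (h _ hu _ hv)
  have hAB : Disjoint ((Iic m).image (a 0 * a ·)) ((Ici m).image (a 1 * a ·)) := by
    refine disjoint_of_lt ?_
    simp only [mem_image, mem_Iic, mem_Ici]
    rintro _ ⟨i, hi, rfl⟩ _ ⟨j, hj, rfl⟩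
    calc a 0 * a i ≤ a 0 * a m := mul_le_mul_right (a.monotone hi) _
      _ < a 1 * a m := mul_lt_mul_left (a.strictMono Fin.zero_lt_one) _
      _ ≤ a 1 * a j := mul_le_mul_right (a.monotone hj) _
  have hABC : Disjoint ((Iic m).image (a 0 * a ·) ∪ (Ici m).image (a 1 * a ·))
      ((Ioi 1).image (a · * a (Fin.last _))) := by
    refine disjoint_union_left.mpr ⟨disjoint_of_lt ?_, disjoint_of_lt ?_⟩
    all_goals
      simp only [mem_image, mem_Ioi]
      rintro _ ⟨i, -, rfl⟩ _ ⟨j, hj, rfl⟩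
    exacts [mul_lt_mul_last a (Fin.zero_lt_one.trans hj) i, mul_lt_mul_last a hj i]
  have mul_left_inj (b : G) : Function.Injective (b * a ·) :=
    fun _ _ h => a.injective (mul_left_cancel h)
  have mul_right_inj (b : G) : Function.Injective (a · * b) :=
    fun _ _ h => a.injective (mul_right_cancel h)
  refine eq_of_subset_of_card_le (union_subset (union_subset ?_ ?_) ?_) ?_
  all_goals try exact image_subset_iff.mpr fun _ _ => mul_mem_mul (ha _) (ha _)
  rw [card_union_of_disjoint hABC, card_union_of_disjoint hAB,
    card_image_of_injective _ (mul_left_inj _), card_image_of_injective _ (mul_left_inj _),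
    card_image_of_injective _ (mul_right_inj _), Fin.card_Iic, Fin.card_Ici, Fin.card_Ioi,
    Fin.val_one]
  omega

theorem zero_mul_succ_eq_one_mul_castSucc (ha : ∀ i, a i ∈ S) (hSS : #(S * S) ≤ 2 * n + 3)
    (m : Fin (n + 1)) : a 0 * a m.succ = a 1 * a m.castSucc := by
  have hmem := image_union_image_union_image_eq_mul_self a ha hSS m.castSucc ▸
    mul_mem_mul (ha 0) (ha m.succ)
  simp only [mem_union, mem_image, mem_Iic, mem_Ici, mem_Ioi] at hmem
  rcases hmem with (⟨i, hi, he⟩ | ⟨i, hi, he⟩) | ⟨j, hj, he⟩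
  · have := a.injective (mul_left_cancel he)
    exact absurd (this ▸ hi) (not_le.mpr Fin.castSucc_lt_succ)
  · have hlt : a i < a m.succ := lt_of_mul_lt_mul_left' <|
      he.trans_lt (mul_lt_mul_left (a.strictMono Fin.zero_lt_one) _)
    have hi' : i = m.castSucc :=
      le_antisymm (Fin.le_castSucc_iff.mpr (a.lt_iff_lt.mp hlt)) hi
    rw [← he, hi']
  · exact absurd he (mul_lt_mul_last a (Fin.zero_lt_one.trans hj) _).ne'

end OrderedGroup

theorem stmt1 {G : Type*} [Group G] [LinearOrder G]
    [CovariantClass G G (· * ·) (· ≤ ·)]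
    [CovariantClass G G (Function.swap (· * ·)) (· ≤ ·)]
    (S : Finset G) (k : ℕ) (hk : 2 ≤ k) (hcard : S.card = k)
    (h : (S * S).card = 2 * S.card - 1) :
    ∃ x y : G, x * y = y * x ∧
      S = (Finset.range k).image (fun i => y * x ^ i) := by
  obtain ⟨n, rfl⟩ : ∃ n, k = n + 2 := ⟨k - 2, by omega⟩
  set a := S.orderEmbOfFin hcard
  have hrec (m : Fin (n + 1)) : a 0 * a m.succ = a 1 * a m.castSucc :=
    zero_mul_succ_eq_one_mul_castSucc a (S.orderEmbOfFin_mem hcard) (by omega) m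
  have h01 : Commute (a 1) (a 0) := by simpa [commute_iff_eq] using (hrec 0).symm
  have hcomm : Commute ((a 0)⁻¹ * a 1) (a 0) := (Commute.refl _).inv_left.mul_left h01
  have hgp := Fin.eq_mul_pow_of_succ_eq_mul hcomm fun m => by
    rw [mul_assoc, ← hrec, inv_mul_cancel_left]
  refine ⟨(a 0)⁻¹ * a 1, a 0, hcomm, ?_⟩
  rw [← image_fin_univ, image_image, ← S.image_orderEmbOfFin_univ hcard]
  exact image_congr fun i _ => hgp i
end

section
/- Let G be a linearly ordered group and S a finite subset of G with |S| ≥ 2. If S is not a geometric progression {yxⁱ : 0 ≤ i ≤ |S|−1} for some commuting x, y ∈ G, then |S·S| ≥ 2|S|. -/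
open Pointwise

lemma chain_strict_mono' {α : Type*} [Preorder α] (g : ℕ → α) (m : ℕ)
    (hg : ∀ k, k + 1 < m → g k < g (k + 1)) :
    ∀ a b, a < b → b < m → g a < g b := by
  intro a b hab hbm
  induction b with
  | zero => omega
  | succ b ih =>
    rcases Nat.lt_succ_iff_lt_or_eq.mp hab with h | h
    · exact (ih h (by omega)).trans (hg b (by omega))
    · subst h; exact hg a (by omega)

theorem stmt2 {G : Type*} [Group G] [LinearOrder G]
    [CovariantClass G G (· * ·) (· ≤ ·)]
    [CovariantClass G G (Function.swap (· * ·)) (· ≤ ·)]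
    (S : Finset G) (hS : 2 ≤ S.card)
    (h : ¬ ∃ x y : G, x * y = y * x ∧
        S = (Finset.range S.card).image (fun i => y * x ^ i)) :
    2 * S.card ≤ (S * S).card := by
  by_contra hc
  push_neg at hc
  set n := S.card with hn
  have hn2 : 2 ≤ n := hS
  -- the monotone enumeration of S
  set f : Fin n → G := ⇑(S.orderEmbOfFin rfl) with hf
  have hfmono : StrictMono f := (S.orderEmbOfFin rfl).strictMono
  have hfmem : ∀ i, f i ∈ S := fun i => S.orderEmbOfFin_mem rfl i
  -- clamped enumeration
  have hlt : ∀ k : ℕ, min k (n - 1) < n := fun k => by omega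
  set e : ℕ → G := fun k => f ⟨min k (n - 1), hlt k⟩ with he
  have e_le : ∀ {a b : ℕ}, a ≤ b → e a ≤ e b := by
    intro a b hab
    exact hfmono.monotone (by simp only [Fin.mk_le_mk]; omega)
  have e_lt : ∀ {a b : ℕ}, a < b → b ≤ n - 1 → e a < e b := by
    intro a b hab hb
    exact hfmono (by simp only [Fin.mk_lt_mk]; omega)
  have e_eq : ∀ {a b : ℕ}, n - 1 ≤ a → n - 1 ≤ b → e a = e b := by
    intro a b ha hb
    simp only [he]
    congr 1
    exact Fin.ext (by simp; omega)
  have e_val : ∀ (k : ℕ) (hk : k < n), e k = f ⟨k, hk⟩ := by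
    intro k hk
    simp only [he]
    congr 1
    exact Fin.ext (by simp; omega)
  -- the three chains, as functions on ℕ
  set A : ℕ → G := fun k => e (k - (n - 1)) * e k with hA
  set B : ℕ → G := fun k => e k * e (k - (n - 1)) with hB
  set F : ℕ → G := fun k =>
    if k ≤ 1 then e 0 * e k else e (max 1 (k - (n - 1))) * e (k - 1) with hF
  have monoA : ∀ a b, a < b → b < 2 * n - 1 → A a < A b := by
    apply chain_strict_mono'
    intro k hk
    simp only [hA]
    rcases le_or_gt (k + 1) (n - 1) with hcase | hcase
    · have h1 : k - (n - 1) = 0 := by omega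
      have h2 : k + 1 - (n - 1) = 0 := by omega
      rw [h1, h2]
      exact mul_lt_mul_of_le_of_lt le_rfl (e_lt (by omega) hcase)
    · have h2 : k + 1 - (n - 1) = k - (n - 1) + 1 := by omega
      rw [h2]
      exact mul_lt_mul_of_lt_of_le (e_lt (by omega) (by omega)) (e_le (by omega))
  have monoB : ∀ a b, a < b → b < 2 * n - 1 → B a < B b := by
    apply chain_strict_mono'
    intro k hk
    simp only [hB]
    rcases le_or_gt (k + 1) (n - 1) with hcase | hcase
    · have h1 : k - (n - 1) = 0 := by omega
      have h2 : k + 1 - (n - 1) = 0 := by omega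
      rw [h1, h2]
      exact mul_lt_mul_of_lt_of_le (e_lt (by omega) hcase) le_rfl
    · have h2 : k + 1 - (n - 1) = k - (n - 1) + 1 := by omega
      rw [h2]
      exact mul_lt_mul_of_le_of_lt (e_le (by omega)) (e_lt (by omega) (by omega))
  have monoF : ∀ a b, a < b → b < 2 * n - 1 → F a < F b := by
    apply chain_strict_mono'
    intro k hk
    simp only [hF]
    rcases Nat.lt_or_ge k 1 with hk0 | hk1
    · -- k = 0
      interval_cases k
      simp only [if_pos (by norm_num : (0:ℕ) ≤ 1), if_pos (le_refl 1)]
      exact mul_lt_mul_of_le_of_lt le_rfl (e_lt (by omega) (by omega))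
    rcases Nat.eq_or_lt_of_le hk1 with hk1' | hk2
    · -- k = 1
      rw [if_pos (by omega), if_neg (by omega)]
      have hmax : max 1 (1 + 1 - (n - 1)) = 1 := by omega
      rw [← hk1', hmax]
      have : 1 + 1 - 1 = 1 := by omega
      rw [hk1'] at this ⊢
      rw [this]
      exact mul_lt_mul_of_lt_of_le (e_lt (by omega) (by omega)) le_rfl
    · -- k ≥ 2
      rw [if_neg (by omega), if_neg (by omega)]
      rcases le_or_gt (k + 1) n with hcase | hcase
      · -- second coordinate strictly increases
        have h1 : max 1 (k - (n - 1)) ≤ max 1 (k + 1 - (n - 1)) := by omega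
        have h2 : k + 1 - 1 = k := by omega
        rw [h2]
        exact mul_lt_mul_of_le_of_lt (e_le (by omega)) (e_lt (by omega) (by omega))
      · -- first coordinate strictly increases, k ≥ n
        have h1 : max 1 (k - (n - 1)) = k - (n - 1) := by omega
        have h2 : max 1 (k + 1 - (n - 1)) = k - (n - 1) + 1 := by omega
        have h3 : k + 1 - 1 = k := by omega
        rw [h1, h2, h3]
        exact mul_lt_mul_of_lt_of_le (e_lt (by omega) (by omega))
          (e_eq (by omega) (by omega)).le
  -- membership
  have memA : ∀ k, A k ∈ S * S := fun k => Finset.mul_mem_mul (hfmem _) (hfmem _)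
  have memB : ∀ k, B k ∈ S * S := fun k => Finset.mul_mem_mul (hfmem _) (hfmem _)
  have memF : ∀ k, F k ∈ S * S := by
    intro k
    simp only [hF]
    split <;> exact Finset.mul_mem_mul (hfmem _) (hfmem _)
  -- card of S*S is exactly 2n-1
  have hcard : (S * S).card = 2 * n - 1 := by
    have hge : 2 * n - 1 ≤ (S * S).card := by
      have : ((Finset.range (2 * n - 1)).image A).card = 2 * n - 1 := by
        rw [Finset.card_image_of_injOn, Finset.card_range]
        intro a ha b hb hab
        simp only [Finset.mem_coe, Finset.mem_range] at ha hb
        by_contra hne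
        rcases Nat.lt_or_ge a b with hlt' | hge'
        · exact absurd hab (monoA a b hlt' hb).ne
        · exact absurd hab (monoA b a (by omega) ha).ne'
      rw [← this]
      apply Finset.card_le_card
      intro x hx
      rcases Finset.mem_image.mp hx with ⟨k, _, rfl⟩
      exact memA k
    omega
  -- chains as Fin functions are all equal to orderEmbOfFin of S*S
  have key : ∀ (C : ℕ → G), (∀ a b, a < b → b < 2 * n - 1 → C a < C b) →
      (∀ k, C k ∈ S * S) →
      (fun i : Fin (2 * n - 1) => C i.1) = (S * S).orderEmbOfFin hcard := by
    intro C hmono hmem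
    apply Finset.orderEmbOfFin_unique hcard (fun i => hmem i.1)
    intro a b hab
    exact hmono a.1 b.1 hab b.2
  have hAF : ∀ k : ℕ, k < 2 * n - 1 → A k = F k := by
    intro k hk
    have := congrFun ((key A monoA memA).trans (key F monoF memF).symm) ⟨k, hk⟩
    exact this
  have hAB : ∀ k : ℕ, k < 2 * n - 1 → A k = B k := by
    intro k hk
    have := congrFun ((key A monoA memA).trans (key B monoB memB).symm) ⟨k, hk⟩
    exact this
  -- commutation of e 0 and e 1
  have hcomm : e 0 * e 1 = e 1 * e 0 := by
    have h1 := hAB 1 (by omega)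
    simp only [hA, hB] at h1
    have : (1 : ℕ) - (n - 1) = 0 := by omega
    rw [this] at h1
    exact h1
  set c : G := (e 0)⁻¹ * e 1 with hcdef
  have hc0 : c * e 0 = e 1 := by
    rw [hcdef, mul_assoc, ← hcomm]
    group
  have hc0' : e 0 * c = e 1 := by rw [hcdef]; group
  -- recursion: e k = c * e (k-1) for 1 ≤ k ≤ n-1
  have hrec : ∀ k : ℕ, 1 ≤ k → k ≤ n - 1 → e k = c * e (k - 1) := by
    intro k hk1 hk2
    rcases Nat.eq_or_lt_of_le hk1 with h1 | h2
    · rw [← h1]; simp only [Nat.sub_self]; exact (hc0.symm)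
    · -- k ≥ 2, use A k = F k
      have hAFk := hAF k (by omega)
      simp only [hA, hF] at hAFk
      rw [if_neg (by omega)] at hAFk
      have e1 : k - (n - 1) = 0 := by omega
      have e2 : max 1 (k - (n - 1)) = 1 := by omega
      rw [e2, e1] at hAFk
      -- e 0 * e k = e 1 * e (k - 1)
      rw [hcdef, mul_assoc, ← hAFk]
      group
  -- e k = e 0 * c ^ k for k ≤ n - 1
  have hcomm' : c * e 0 = e 0 * c := by rw [hc0, hc0']
  have hpow : ∀ k : ℕ, k ≤ n - 1 → e k = e 0 * c ^ k := by
    intro k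
    induction k with
    | zero => simp
    | succ m ih =>
      intro hm
      have h1 : e (m + 1) = c * e m := by
        have := hrec (m + 1) (by omega) hm
        simpa using this
      rw [h1, ih (by omega), ← mul_assoc, hcomm', mul_assoc, ← pow_succ']
  -- conclude S is a geometric progression
  apply h
  refine ⟨c, e 0, hcomm', ?_⟩
  apply Finset.ext
  intro a
  simp only [Finset.mem_image, Finset.mem_range]
  constructor
  · intro ha
    have : a ∈ Set.range f := by rw [hf, Finset.range_orderEmbOfFin]; exact ha
    rcases this with ⟨i, rfl⟩
    refine ⟨i.1, by omega, ?_⟩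
    rw [← hpow i.1 (by omega), e_val i.1 i.2]
  · rintro ⟨i, hi, rfl⟩
    rw [← hpow i (by omega), e_val i (by omega)]
    exact hfmem _
end

section
/- Let G be a linearly ordered group and S = {x₁, x₂, x₃} ⊆ G with x₁ < x₂ < x₃. If |S·S| ≤ 5, then x₁x₂ = x₂x₁ and x₁x₃ = x₂², and hence S = {y, yx, yx²} for the commuting elements y = x₁ and x = x₂x₁⁻¹. -/
/-!
In a bi-ordered group the products `aa < ab < bb < bc < cc` of `a < b < c` are already five
distinct elements of `S·S`, so `|S·S| ≤ 5` forces `S·S` to consist of exactly these. But `ba` lies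
strictly between `aa` and `bb`, and `ac` strictly between `ab` and `bc`, hence `ba = ab` and
`ac = bb`.
-/

open Pointwise

theorem StrictMono.eq_of_mem_of_lt_of_lt {α : Type*} [LinearOrder α] {n : ℕ} {f : Fin n → α}
    (hf : StrictMono f) {s : Finset α} (hfs : ∀ i, f i ∈ s) (hs : s.card ≤ n) {z : α}
    (hz : z ∈ s) {i m j : Fin n} (him : i.val + 1 = m.val) (hmj : m.val + 1 = j.val)
    (hi : f i < z) (hj : z < f j) : z = f m := by
  have hsf : Finset.univ.image f = s :=
    Finset.eq_of_subset_of_card_le (Finset.image_subset_iff.2 fun i _ => hfs i)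
      (by rwa [Finset.card_image_of_injective _ hf.injective, Finset.card_univ, Fintype.card_fin])
  obtain ⟨k, -, rfl⟩ := Finset.mem_image.1 (hsf ▸ hz)
  have hik : i < k := hf.lt_iff_lt.1 hi
  have hkj : k < j := hf.lt_iff_lt.1 hj
  congr 1
  omega

section OrderedGroup

variable {G : Type*} [Group G] [LinearOrder G] [MulLeftMono G] [MulRightMono G] {a b c : G}

theorem strictMono_triple_products (hab : a < b) (hbc : b < c) :
    StrictMono ![a * a, a * b, b * b, b * c, c * c] := by
  refine Fin.strictMono_iff_lt_succ.2 fun i => ?_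
  fin_cases i
  · exact mul_lt_mul_right hab a
  · exact mul_lt_mul_left hab b
  · exact mul_lt_mul_right hbc b
  · exact mul_lt_mul_left hbc c

theorem commute_and_mul_eq_mul_self_of_card_mul_le_five (hab : a < b) (hbc : b < c)
    (h : (({a, b, c} : Finset G) * {a, b, c}).card ≤ 5) :
    Commute a b ∧ a * c = b * b := by
  have hf := strictMono_triple_products hab hbc
  have hmem : ∀ {x y : G}, x ∈ ({a, b, c} : Finset G) → y ∈ ({a, b, c} : Finset G) →
      x * y ∈ ({a, b, c} : Finset G) * {a, b, c} := Finset.mul_mem_mul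
  have hfs : ∀ i, ![a * a, a * b, b * b, b * c, c * c] i ∈ ({a, b, c} : Finset G) * {a, b, c} := by
    intro i
    fin_cases i <;> exact hmem (by simp) (by simp)
  constructor
  · exact (hf.eq_of_mem_of_lt_of_lt hfs h (hmem (by simp) (by simp : a ∈ _))
      (i := 0) (m := 1) (j := 2) rfl rfl (mul_lt_mul_left hab a) (mul_lt_mul_right hab b)).symm
  · exact hf.eq_of_mem_of_lt_of_lt hfs h (hmem (by simp) (by simp : c ∈ _))
      (i := 1) (m := 2) (j := 3) rfl rfl (mul_lt_mul_right hbc a) (mul_lt_mul_left hab c)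

end OrderedGroup

theorem Commute.mul_mul_inv_sq_eq {G : Type*} [Group G] {a b c : G} (hab : Commute a b)
    (hc : a * c = b * b) : a * (b * a⁻¹) ^ 2 = c := by
  rw [eq_inv_mul_of_mul_eq hc, ← hab.inv_left.eq, hab.inv_left.mul_pow, pow_two b]
  group

theorem stmt5 {G : Type*} [Group G] [LinearOrder G]
    [CovariantClass G G (· * ·) (· ≤ ·)]
    [CovariantClass G G (Function.swap (· * ·)) (· ≤ ·)]
    (x₁ x₂ x₃ : G) (h12 : x₁ < x₂) (h23 : x₂ < x₃)
    (S : Finset G) (hS : S = {x₁, x₂, x₃})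
    (h : (S * S).card ≤ 5) :
    x₁ * x₂ = x₂ * x₁ ∧ x₁ * x₃ = x₂ * x₂ ∧
      x₁ * (x₂ * x₁⁻¹) = (x₂ * x₁⁻¹) * x₁ ∧
      S = {x₁, x₁ * (x₂ * x₁⁻¹), x₁ * (x₂ * x₁⁻¹) ^ 2} := by
  subst hS
  obtain ⟨hcomm, h13⟩ := commute_and_mul_eq_mul_self_of_card_mul_le_five h12 h23 h
  refine ⟨hcomm.eq, h13, (hcomm.mul_right (Commute.refl x₁).inv_right).eq, ?_⟩
  rw [hcomm.mul_inv_cancel_assoc, hcomm.mul_mul_inv_sq_eq h13]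
end

section
/- Let G be a linearly ordered group, S = {x₁ < … < x_k} a finite subset with k ≥ 2, and suppose x₂xᵢ = x₁xᵢ₊₁ for all 1 ≤ i ≤ k−1 (with x₂x₁ = x₁x₂). Then all elements of S pairwise commute, and S = {y, yx, …, yx^{k−1}} where y = x₁ and x = x₂x₁⁻¹ commute. -/
open Pointwise

theorem stmt7 {G : Type*} [Group G] [LinearOrder G]
    [CovariantClass G G (· * ·) (· ≤ ·)]
    [CovariantClass G G (Function.swap (· * ·)) (· ≤ ·)]
    (k : ℕ) (hk : 2 ≤ k) (x : ℕ → G)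
    (hmono : ∀ i j, i < j → j < k → x i < x j)
    (hrow : ∀ i, i < k - 1 → x 1 * x i = x 0 * x (i + 1))
    (S : Finset G) (hS : S = (Finset.range k).image x) :
    (∀ i < k, ∀ j < k, x i * x j = x j * x i) ∧
      x 0 * (x 1 * (x 0)⁻¹) = (x 1 * (x 0)⁻¹) * x 0 ∧
      S = (Finset.range k).image (fun i => x 0 * (x 1 * (x 0)⁻¹) ^ i) := by
  have h01 : x 1 * x 0 = x 0 * x 1 := by
    have := hrow 0 (by omega); simpa using this
  set c := x 1 * (x 0)⁻¹ with hc_def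
  have hc : Commute (x 0) c := by
    show x 0 * c = c * x 0
    rw [hc_def, ← mul_assoc, ← h01, mul_inv_cancel_right, inv_mul_cancel_right]
  have hx1 : x 0 * c = x 1 := by rw [hc.eq, hc_def, inv_mul_cancel_right]
  have key : ∀ i, i < k → x i = x 0 * c ^ i := by
    intro i
    induction i with
    | zero => simp
    | succ n ih =>
      intro h
      have hn := ih (by omega)
      have hr := hrow n (by omega)
      apply mul_left_cancel (a := x 0)
      rw [← hr, hn, ← hx1, pow_succ']
      calc x 0 * c * (x 0 * c ^ n)
          = x 0 * (c * x 0) * c ^ n := by group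
        _ = x 0 * (x 0 * c) * c ^ n := by rw [hc.eq]
        _ = x 0 * (x 0 * (c * c ^ n)) := by group
  have H : ∀ m n : ℕ, (x 0 * c ^ m) * (x 0 * c ^ n) = x 0 * x 0 * c ^ (m + n) := by
    intro m n
    calc (x 0 * c ^ m) * (x 0 * c ^ n)
        = x 0 * (c ^ m * x 0) * c ^ n := by group
      _ = x 0 * (x 0 * c ^ m) * c ^ n := by rw [(hc.pow_right m).eq]
      _ = x 0 * x 0 * c ^ (m + n) := by rw [pow_add]; group
  refine ⟨?_, hc.eq, ?_⟩
  · intro i hi j hj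
    rw [key i hi, key j hj, H, H, Nat.add_comm]
  · rw [hS]
    exact Finset.image_congr fun i hi => key i (Finset.mem_range.mp hi)
end

section
/- Let G be a linearly ordered group, T a finite subset of G, and x_k an element of G strictly greater than every element of T. If x_k·T ∩ T·T = ∅ and T·x_k ∩ T·T = ∅, then for S = T ∪ {x_k} one has |S·S| ≥ |T·T| + |T| + 1. -/
open Pointwise

/-! `S·S` contains the three pairwise disjoint sets `T·T`, `x·T` and `{x·x}`: the first two are
disjoint by hypothesis, `x·x ∉ x·T` since `x ∉ T`, and `x·x ∉ T·T` because in a bi-ordered group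
`t < x` and `t' < x` give `t·t' < x·x`. -/

namespace Finset

variable {G : Type*} [Group G]

theorem mul_notMem_mul_of_forall_lt [LinearOrder G]
    [MulLeftMono G] [MulRightMono G] {A B : Finset G} {x y : G}
    (hA : ∀ a ∈ A, a < x) (hB : ∀ b ∈ B, b < y) : x * y ∉ A * B := by
  intro h
  obtain ⟨a, ha, b, hb, hab⟩ := mem_mul.1 h
  exact (mul_lt_mul_of_lt_of_lt (hA a ha) (hB b hb)).ne hab

theorem card_mul_self_add_card_add_one_le_card_insert_mul_insert [DecidableEq G]
    {T : Finset G} {x : G} (hx : x ∉ T) (hdisj : Disjoint ({x} * T) (T * T))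
    (hxx : x * x ∉ T * T) :
    (T * T).card + T.card + 1 ≤ (insert x T * insert x T).card := by
  have hsub : insert (x * x) ({x} * T ∪ T * T) ⊆ insert x T * insert x T :=
    insert_subset (mul_mem_mul (mem_insert_self x T) (mem_insert_self x T))
      (union_subset (mul_subset_mul (singleton_subset_iff.2 (mem_insert_self x T))
        (subset_insert x T)) (mul_subset_mul (subset_insert x T) (subset_insert x T)))
  have hxx' : x * x ∉ {x} * T ∪ T * T := by
    rw [mem_union, singleton_mul, ← smul_eq_mul, smul_mem_smul_finset_iff]
    exact not_or.2 ⟨hx, hxx⟩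
  calc (T * T).card + T.card + 1 = (insert (x * x) ({x} * T ∪ T * T)).card := by
        rw [card_insert_of_notMem hxx', card_union_of_disjoint hdisj, card_singleton_mul,
          add_comm T.card]
    _ ≤ (insert x T * insert x T).card := card_le_card hsub

end Finset

theorem stmt8_general {G : Type*} [Group G] [LinearOrder G]
    [CovariantClass G G (· * ·) (· ≤ ·)]
    [CovariantClass G G (Function.swap (· * ·)) (· ≤ ·)]
    (T : Finset G) (xk : G) (hgt : ∀ t ∈ T, t < xk)
    (h1 : ({xk} * T : Finset G) ∩ (T * T) = ∅) :
    (T * T).card + T.card + 1 ≤ ((insert xk T) * (insert xk T)).card :=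
  Finset.card_mul_self_add_card_add_one_le_card_insert_mul_insert
    (fun h ↦ (hgt xk h).false) (Finset.disjoint_iff_inter_eq_empty.2 h1)
    (Finset.mul_notMem_mul_of_forall_lt hgt hgt)

theorem stmt8 {G : Type*} [Group G] [LinearOrder G]
    [CovariantClass G G (· * ·) (· ≤ ·)]
    [CovariantClass G G (Function.swap (· * ·)) (· ≤ ·)]
    (T : Finset G) (xk : G) (hgt : ∀ t ∈ T, t < xk)
    (h1 : ({xk} * T : Finset G) ∩ (T * T) = ∅)
    (h2 : (T * {xk} : Finset G) ∩ (T * T) = ∅) :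
    (T * T).card + T.card + 1 ≤ ((insert xk T) * (insert xk T)).card :=
  stmt8_general T xk hgt h1
end

section
/- Let G be a linearly ordered group and T = {yxⁱ : i ∈ I} a finite geometric progression with commuting x, y and x > 1. Let x_k ∈ G with x_k·T = T·x_k (as sets). Then x_k commutes with every element of T. -/
/-!
Conjugation by `xk` is strictly monotone in a bi-ordered group, and the hypothesis says it maps
the finite set `T` into itself. A strictly monotone self-map of a finite chain is the identity,
since it preserves the increasing enumeration of the chain.
-/

open Pointwise

theorem Finset.apply_eq_self_of_strictMonoOn_of_mapsTo {α : Type*} [LinearOrder α] {f : α → α}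
    {s : Finset α} (hf : StrictMonoOn f s) (hmaps : Set.MapsTo f s s) :
    ∀ a ∈ s, f a = a := by
  set e := s.orderEmbOfFin rfl
  have he : ∀ i, e i ∈ s := fun i => s.orderEmbOfFin_mem rfl i
  have hfe : f ∘ e = e :=
    s.orderEmbOfFin_unique rfl (fun i => hmaps (he i))
      (fun i j hij => hf (he i) (he j) (e.strictMono hij))
  intro a ha
  obtain ⟨i, rfl⟩ : a ∈ Set.range e := by rw [s.range_orderEmbOfFin rfl]; exact ha
  exact congrFun hfe i

theorem strictMono_conj {G : Type*} [Group G] [LinearOrder G]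
    [CovariantClass G G (· * ·) (· ≤ ·)]
    [CovariantClass G G (Function.swap (· * ·)) (· ≤ ·)] (g : G) :
    StrictMono (fun t => g * t * g⁻¹) :=
  fun _ _ hab => mul_lt_mul_left (mul_lt_mul_right hab g) g⁻¹

theorem Finset.conj_mem_of_singleton_mul_subset {G : Type*} [Group G] [DecidableEq G]
    {g : G} {T : Finset G} (h : ({g} * T : Finset G) ⊆ T * {g}) {t : G} (ht : t ∈ T) :
    g * t * g⁻¹ ∈ T := by
  obtain ⟨s, hs, g', hg', hst⟩ :=
    Finset.mem_mul.mp (h (Finset.mul_mem_mul (Finset.mem_singleton_self g) ht))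
  rw [Finset.mem_singleton] at hg'
  rwa [← hst, hg', mul_inv_cancel_right]

theorem stmt10_general {G : Type*} [Group G] [LinearOrder G]
    [CovariantClass G G (· * ·) (· ≤ ·)]
    [CovariantClass G G (Function.swap (· * ·)) (· ≤ ·)]
    (T : Finset G)
    (xk : G) (h : ({xk} * T : Finset G) = T * {xk}) :
    ∀ t ∈ T, xk * t = t * xk := by
  intro t ht
  have hfix : xk * t * xk⁻¹ = t :=
    Finset.apply_eq_self_of_strictMonoOn_of_mapsTo ((strictMono_conj xk).strictMonoOn _)
      (fun _ hs => Finset.conj_mem_of_singleton_mul_subset h.subset hs) t ht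
  exact mul_inv_eq_iff_eq_mul.mp hfix

theorem stmt10 {G : Type*} [Group G] [LinearOrder G]
    [CovariantClass G G (· * ·) (· ≤ ·)]
    [CovariantClass G G (Function.swap (· * ·)) (· ≤ ·)]
    (x y : G) (hxy : x * y = y * x) (hx : 1 < x)
    (I : Finset ℕ) (T : Finset G) (hT : T = I.image (fun i => y * x ^ i))
    (xk : G) (h : ({xk} * T : Finset G) = T * {xk}) :
    ∀ t ∈ T, xk * t = t * xk :=
  stmt10_general T xk h
end

section
/- Let G be a linearly ordered group and S = {x₁ < … < x_k} with k ≥ 4 a finite subset satisfying |S·S| ≤ 3|S| − 4. Set T = {x₁, …, x_{k−1}}. If |T·T| ≥ 3|T| − 3, then x_{k−1}x_k = x_kx_{k−1} and x_{k−2}x_k = x_kx_{k−2} = x_{k−1}². -/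
/-! Write `y > c > b` for the three largest elements of `S`, so that `T = S \ {y}`. The hypotheses
say `S·S \ T·T` has at most two elements. Since `c²` is the largest element of `T·T`, the products
`cy`, `yc`, `y²` all lie outside `T·T`, which forces `cy = yc`; and every element of `S·S` below
`cy` lies in `T·T`. Hence `by` and `yb` are products in `T·T` exceeding `bc` and `cb`, so
`by = c·p` and `yb = q·c` with `p, q ∈ T`. Ruling out `p, q ≤ b` by comparing with `bc` and `cb`
leaves `by = c²` or `yb = c²`, and conjugating by `y`, which commutes with `c`, gives the other. -/

open Pointwise Finset

theorem mem_of_card_sdiff_le_two {α : Type*} [DecidableEq α] {A B : Finset α}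
    (hcard : #(B \ A) ≤ 2) {u v w : α} (hv : v ∈ B \ A) (hw : w ∈ B \ A) (hvw : v ≠ w)
    (hu : u ∈ B) (huv : u ≠ v) (huw : u ≠ w) : u ∈ A := by
  by_contra huA
  have hsub : {u, v, w} ⊆ B \ A := by
    simp only [insert_subset_iff, singleton_subset_iff]
    exact ⟨mem_sdiff.2 ⟨hu, huA⟩, hv, hw⟩
  have := card_le_card hsub
  rw [card_insert_of_notMem (by simp [huv, huw]), card_pair hvw] at this
  omega

theorem card_image_range_of_strictMonoOn {β : Type*} [LinearOrder β] {x : ℕ → β} {k n : ℕ}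
    (hx : StrictMonoOn x (Set.Iio k)) (hn : n ≤ k) : #((range n).image x) = n := by
  rw [card_image_of_injOn, card_range]
  exact hx.injOn.mono fun i hi => lt_of_lt_of_le (mem_range.1 hi) hn

theorem Commute.mul_eq_sq_iff {G : Type*} [Group G] {b c y : G} (hcy : Commute c y) :
    b * y = c * c ↔ y * b = c * c := by
  have hy : Commute y (c * c) := hcy.symm.mul_right hcy.symm
  constructor <;> intro h
  · rw [eq_mul_inv_of_mul_eq h, ← mul_assoc, hy.eq, mul_inv_cancel_right]
  · rw [eq_inv_mul_of_mul_eq h, mul_assoc, ← hy.eq, inv_mul_cancel_left]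

section OrderedGroup

variable {G : Type*} [Group G] [LinearOrder G] [MulLeftMono G] [MulRightMono G]

theorem mul_le_sq_of_mem_mul {T : Finset G} {c u : G} (hT : ∀ t ∈ T, t ≤ c)
    (hu : u ∈ T * T) : u ≤ c * c := by
  obtain ⟨s, hs, t, ht, rfl⟩ := mem_mul.1 hu
  exact mul_le_mul' (hT s hs) (hT t ht)

theorem exists_mem_eq_mul_left_of_lt {T : Finset G} {b c u : G} (hbc : b ≤ c)
    (hT : ∀ t ∈ T, t ≤ b ∨ t = c) (hu : u ∈ T * T) (hlt : b * c < u) : ∃ p ∈ T, u = c * p := by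
  obtain ⟨s, hs, t, ht, rfl⟩ := mem_mul.1 hu
  rcases hT s hs with hsb | rfl
  · have htc : t ≤ c := (hT t ht).elim (·.trans hbc) le_of_eq
    exact absurd (mul_le_mul' hsb htc) hlt.not_ge
  · exact ⟨t, ht, rfl⟩

theorem exists_mem_eq_mul_right_of_lt {T : Finset G} {b c u : G} (hbc : b ≤ c)
    (hT : ∀ t ∈ T, t ≤ b ∨ t = c) (hu : u ∈ T * T) (hlt : c * b < u) : ∃ q ∈ T, u = q * c := by
  obtain ⟨s, hs, t, ht, rfl⟩ := mem_mul.1 hu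
  rcases hT t ht with htb | rfl
  · have hsc : s ≤ c := (hT s hs).elim (·.trans hbc) le_of_eq
    exact absurd (mul_le_mul' hsc htb) hlt.not_ge
  · exact ⟨s, hs, rfl⟩

theorem mul_eq_sq_of_mul_eq_mul {b c y p q : G} (hbc : b < c) (hcy : c < y) (hcomm : Commute c y)
    (hp : p ≤ b ∨ p = c) (hq : q ≤ b ∨ q = c) (hbyp : b * y = c * p) (hybq : y * b = q * c) :
    b * y = c * c := by
  rcases hp with hp | rfl
  · rcases hq with hq | rfl
    · refine absurd ?_ (lt_irrefl (b * c))
      calc b * c < b * y := mul_lt_mul_right hcy b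
        _ = c * p := hbyp
        _ ≤ c * b := mul_le_mul_right hp c
        _ < y * b := mul_lt_mul_left hcy b
        _ = q * c := hybq
        _ ≤ b * c := mul_le_mul_left hq c
    · exact hcomm.mul_eq_sq_iff.2 hybq
  · exact hbyp

theorem commute_and_mul_eq_sq_of_card_sdiff_le_two {T : Finset G} {b c y : G}
    (hbc : b < c) (hcy : c < y) (hT : ∀ t ∈ T, t ≤ b ∨ t = c) (hbT : b ∈ T) (hcT : c ∈ T)
    (hcard : #((insert y T * insert y T) \ (T * T)) ≤ 2) :
    Commute c y ∧ b * y = c * c ∧ y * b = c * c := by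
  set S := insert y T
  have hTc : ∀ t ∈ T, t ≤ c := fun t ht => (hT t ht).elim (·.trans hbc.le) le_of_eq
  have hyS : y ∈ S := mem_insert_self y T
  have hcS : c ∈ S := mem_insert_of_mem hcT
  have hbS : b ∈ S := mem_insert_of_mem hbT
  have above : ∀ u ∈ S * S, c * c < u → u ∈ (S * S) \ (T * T) := fun u hu hlt =>
    mem_sdiff.2 ⟨hu, fun huT => (mul_le_sq_of_mem_mul hTc huT).not_gt hlt⟩
  have hcc_cy : c * c < c * y := mul_lt_mul_right hcy c
  have hcc_yc : c * c < y * c := mul_lt_mul_left hcy c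
  have hcy_yy : c * y < y * y := mul_lt_mul_left hcy y
  have hyc_yy : y * c < y * y := mul_lt_mul_right hcy y
  have top_two : ∀ u ∈ S * S, u ≠ c * y → u ≠ y * y → u ∈ T * T := fun u hu =>
    mem_of_card_sdiff_le_two hcard (above _ (mul_mem_mul hcS hyS) hcc_cy)
      (above _ (mul_mem_mul hyS hyS) (hcc_cy.trans hcy_yy)) hcy_yy.ne hu
  have hcomm : Commute c y := by
    by_contra hne
    exact (mul_le_sq_of_mem_mul hTc
      (top_two _ (mul_mem_mul hyS hcS) (Ne.symm hne) hyc_yy.ne)).not_gt hcc_yc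
  have below : ∀ u ∈ S * S, u < c * y → u ∈ T * T := fun u hu hlt =>
    top_two u hu hlt.ne (hlt.trans hcy_yy).ne
  obtain ⟨p, hp, hbyp⟩ := exists_mem_eq_mul_left_of_lt hbc.le hT
    (below _ (mul_mem_mul hbS hyS) (mul_lt_mul_left hbc y)) (mul_lt_mul_right hcy b)
  obtain ⟨q, hq, hybq⟩ := exists_mem_eq_mul_right_of_lt hbc.le hT
    (below _ (mul_mem_mul hyS hbS) (hcomm.eq ▸ mul_lt_mul_right hbc y)) (mul_lt_mul_left hcy b)
  have hsq := mul_eq_sq_of_mul_eq_mul hbc hcy hcomm (hT p hp) (hT q hq) hbyp hybq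
  exact ⟨hcomm, hsq, hcomm.mul_eq_sq_iff.1 hsq⟩

end OrderedGroup

theorem stmt11 {G : Type*} [Group G] [LinearOrder G]
    [CovariantClass G G (· * ·) (· ≤ ·)]
    [CovariantClass G G (Function.swap (· * ·)) (· ≤ ·)]
    (k : ℕ) (hk : 4 ≤ k) (x : ℕ → G)
    (hmono : ∀ i j, i < j → j < k → x i < x j)
    (S : Finset G) (hS : S = (Finset.range k).image x)
    (hScard : (S * S).card ≤ 3 * S.card - 4)
    (T : Finset G) (hT : T = (Finset.range (k - 1)).image x)
    (hTcard : 3 * T.card - 3 ≤ (T * T).card) :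
    x (k - 2) * x (k - 1) = x (k - 1) * x (k - 2) ∧
      x (k - 3) * x (k - 1) = x (k - 1) * x (k - 3) ∧
      x (k - 3) * x (k - 1) = x (k - 2) * x (k - 2) := by
  have hx : StrictMonoOn x (Set.Iio k) := fun i _ j hj hij => hmono i j hij hj
  have hST : S = insert (x (k - 1)) T := by
    rw [hS, hT, ← image_insert, ← range_add_one, Nat.sub_add_cancel (by omega)]
  have hTS : T ⊆ S := hST ▸ subset_insert _ _
  have hSk : #S = k := hS ▸ card_image_range_of_strictMonoOn hx le_rfl
  have hTk : #T = k - 1 := hT ▸ card_image_range_of_strictMonoOn hx (Nat.sub_le k 1)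
  have hcard : #((insert (x (k - 1)) T * insert (x (k - 1)) T) \ (T * T)) ≤ 2 := by
    rw [← hST, card_sdiff_of_subset (mul_subset_mul hTS hTS)]
    omega
  have hTtop : ∀ t ∈ T, t ≤ x (k - 3) ∨ t = x (k - 2) := by
    rw [hT, forall_mem_image]
    intro i hi
    rw [mem_range] at hi
    rcases (show i ≤ k - 3 ∨ i = k - 2 by omega) with hle | rfl
    · exact Or.inl (hx.monotoneOn (Set.mem_Iio.2 (by omega)) (Set.mem_Iio.2 (by omega)) hle)
    · exact Or.inr rfl
  have hmemT : ∀ i < k - 1, x i ∈ T := fun i hi => hT ▸ mem_image_of_mem x (mem_range.2 hi)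
  obtain ⟨hcomm, hby, hyb⟩ := commute_and_mul_eq_sq_of_card_sdiff_le_two
    (hmono _ _ (by omega) (by omega)) (hmono _ _ (by omega) (by omega)) hTtop
    (hmemT _ (by omega)) (hmemT _ (by omega)) hcard
  exact ⟨hcomm.eq, hby.trans hyb.symm, hby⟩
end

section
/- Let G be a linearly ordered group and S a finite subset of G with |S| ≥ 3 and |S·S| ≤ 3|S| − 4. Then the subgroup of G generated by S is generated by at most |S| − 1 elements (in fact it is generated by two commuting elements, hence is abelian of rank at most 2). -/
/-!
Write `S = A ∪ {v}` with `v = max S` and `w = max A`, and induct on `|S|` to show that either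
`S ⊆ y⟨x⟩` for commuting `x, y`, or `|S·S| ≥ 3|S| - 3`.

If `A ⊆ y⟨x⟩` and `v·a` or `a·v` lies in `A·A` for some `a ∈ A`, then `v` is a quotient of three
elements of the coset, hence lies in it. Otherwise `v·S` is disjoint from `A·A`, and together with
`|A·A| ≥ 2|A| - 1` this gives `|S·S| ≥ 3|S| - 3`.

If instead `|A·A| ≥ 3|A| - 3`, then `v·w`, `w·v`, `v·v` are new products, as is `v·a` or `a·v`
whenever it leaves `A·A`. So either `S·S` gains three new elements, or `v·w = w·v` and `v·a`,
`a·v ∈ A·A` for all `a < w`. In the last case a downward induction on `a ∈ A` shows that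
`S ⊆ w⟨w⁻¹v⟩`: writing `v·a = b·c` and `a·v = b'·c'` with factors in `A`, order considerations
show that either `b, c > a` or `b', c' > a`, and then `a = v⁻¹bc` or `a = b'c'v⁻¹`.

Finally, a subset of a coset `s₀⟨x⟩` containing `s₀` generates `⟨s₀, g⟩`, where `⟨g⟩` is its
generated subgroup intersected with the cyclic group `⟨x⟩`.
-/

open Pointwise Finset

section Coset

variable {G : Type*} [Group G] {x y : G}

def zpowCoset (x y : G) : Set G := {s | ∃ n : ℤ, s = y * x ^ n}

def InCommutingCoset (S : Set G) : Prop := ∃ x y : G, Commute x y ∧ S ⊆ zpowCoset x y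

theorem Commute.mul_mul_inv_mem_zpowCoset (h : Commute x y) {a b c : G}
    (ha : a ∈ zpowCoset x y) (hb : b ∈ zpowCoset x y) (hc : c ∈ zpowCoset x y) :
    b * c * a⁻¹ ∈ zpowCoset x y := by
  obtain ⟨α, rfl⟩ := ha
  obtain ⟨β, rfl⟩ := hb
  obtain ⟨γ, rfl⟩ := hc
  refine ⟨β + γ - α, ?_⟩
  calc _ = y * x ^ β * (y * x ^ (γ - α) * y⁻¹) := by group
    _ = _ := by rw [(h.zpow_left _).symm.mul_inv_cancel]; group

theorem Commute.inv_mul_mul_mem_zpowCoset (h : Commute x y) {a b c : G}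
    (ha : a ∈ zpowCoset x y) (hb : b ∈ zpowCoset x y) (hc : c ∈ zpowCoset x y) :
    a⁻¹ * (b * c) ∈ zpowCoset x y := by
  obtain ⟨α, rfl⟩ := ha
  obtain ⟨β, rfl⟩ := hb
  obtain ⟨γ, rfl⟩ := hc
  refine ⟨β + γ - α, ?_⟩
  calc _ = y * (y⁻¹ * x ^ (β - α) * y) * x ^ γ := by group
    _ = _ := by rw [(h.zpow_left _).symm.inv_mul_cancel]; group

theorem InCommutingCoset.insert_of_mul_mem [DecidableEq G] {A : Finset G} {a v : G}
    (hA : InCommutingCoset (A : Set G)) (ha : a ∈ A) (hv : v * a ∈ A * A ∨ a * v ∈ A * A) :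
    InCommutingCoset ((insert v A : Finset G) : Set G) := by
  obtain ⟨x, y, hxy, hAxy⟩ := hA
  refine ⟨x, y, hxy, coe_insert v A ▸ Set.insert_subset ?_ hAxy⟩
  rcases hv with hva | hav
  · obtain ⟨b, hb, c, hc, hbc⟩ := mem_mul.1 hva
    simpa [hbc] using hxy.mul_mul_inv_mem_zpowCoset (hAxy ha) (hAxy hb) (hAxy hc)
  · obtain ⟨b, hb, c, hc, hbc⟩ := mem_mul.1 hav
    simpa [hbc] using hxy.inv_mul_mul_mem_zpowCoset (hAxy ha) (hAxy hb) (hAxy hc)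

theorem inv_mul_mem_zpowers_of_mem_zpowCoset {s t : G} (hs : s ∈ zpowCoset x y)
    (ht : t ∈ zpowCoset x y) : s⁻¹ * t ∈ Subgroup.zpowers x := by
  obtain ⟨m, rfl⟩ := hs
  obtain ⟨n, rfl⟩ := ht
  exact ⟨n - m, by simp only [zpow_sub]; group⟩

theorem Subgroup.closure_le_closure_pair_of_subset_zpowCoset {S : Set G}
    (hS : S ⊆ zpowCoset x y) : closure S ≤ closure {x, y} := by
  rw [closure_le]
  rintro s hs
  obtain ⟨n, rfl⟩ := hS hs
  exact mul_mem (subset_closure (by simp)) (zpow_mem (subset_closure (by simp)) n)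

theorem Subgroup.exists_closure_pair_eq_of_forall_inv_mul_mem_zpowers {S : Set G} {s₀ : G}
    (hs₀ : s₀ ∈ S) (hS : ∀ s ∈ S, s₀⁻¹ * s ∈ zpowers x) : ∃ g, closure {s₀, g} = closure S := by
  obtain ⟨n, hn⟩ := (le_zpowers_iff x (closure S ⊓ zpowers x)).1 inf_le_right
  have hK : ∀ g, g ∈ zpowers (x ^ n) ↔ g ∈ closure S ∧ g ∈ zpowers x := by
    simp [← hn, mem_inf]
  refine ⟨x ^ n, le_antisymm ?_ ?_⟩
  · rw [closure_le, Set.insert_subset_iff, Set.singleton_subset_iff]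
    exact ⟨subset_closure hs₀, ((hK _).1 (mem_zpowers _)).1⟩
  · rw [closure_le]
    intro s hs
    have hquot : s₀⁻¹ * s ∈ zpowers (x ^ n) :=
      (hK _).2 ⟨mul_mem (inv_mem (subset_closure hs₀)) (subset_closure hs), hS s hs⟩
    rw [← mul_inv_cancel_left s₀ s]
    exact mul_mem (subset_closure (by simp))
      (zpowers_le.2 (subset_closure (by simp)) hquot)

end Coset

section Ordered

variable {G : Type*} [Group G] [LinearOrder G] [MulLeftMono G] [MulRightMono G]

theorem card_mul_add_card_insert_le {A : Finset G} {v : G} (hv : ∀ a ∈ A, a < v)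
    (hA : ∀ a ∈ A, v * a ∉ A * A) : #(A * A) + #(insert v A) ≤ #(insert v A * insert v A) := by
  set S := insert v A
  have hvv : v * v ∉ A * A := by
    intro hvv
    obtain ⟨b, hb, c, hc, hbc⟩ := mem_mul.1 hvv
    exact (mul_lt_mul_of_lt_of_lt (hv b hb) (hv c hc)).ne hbc
  have hdisj : Disjoint (A * A) (v • S) := by
    rw [disjoint_right]
    rintro _ hu
    obtain ⟨s, hs, rfl⟩ := mem_smul_finset.1 hu
    obtain rfl | hsA := mem_insert.1 hs
    exacts [hvv, hA s hsA]
  rw [← card_smul_finset v S, ← card_union_of_disjoint hdisj]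
  exact card_le_card (union_subset (mul_subset_mul (subset_insert v A) (subset_insert v A))
    (smul_finset_subset_mul (mem_insert_self v A)))

theorem card_mul_add_three_le {A : Finset G} {v w : G} (hv : ∀ a ∈ A, a < v) (hwA : w ∈ A)
    (hw : ∀ a ∈ A, a ≤ w)
    (h : ¬ (Commute v w ∧ ∀ a ∈ A, a ≠ w → v * a ∈ A * A ∧ a * v ∈ A * A)) :
    #(A * A) + 3 ≤ #(insert v A * insert v A) := by
  set S := insert v A
  have hAA : A * A ⊆ S * S := mul_subset_mul (subset_insert v A) (subset_insert v A)
  have hlt : ∀ u ∈ A * A, u < v * w ∧ u < w * v := by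
    intro u hu
    obtain ⟨b, hb, c, hc, rfl⟩ := mem_mul.1 hu
    exact ⟨mul_lt_mul_of_lt_of_le (hv b hb) (hw c hc),
      mul_lt_mul_of_le_of_lt (hw b hb) (hv c hc)⟩
  have hnew : ∀ b ∈ S, ∀ c ∈ S, (v * w ≤ b * c ∨ w * v ≤ b * c) → b * c ∈ (S * S) \ (A * A) :=
    fun b hb c hc hbc => mem_sdiff.2 ⟨mul_mem_mul hb hc, fun hmem => by
      rcases hbc with hbc | hbc
      exacts [(hlt _ hmem).1.not_ge hbc, (hlt _ hmem).2.not_ge hbc]⟩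
  have hvS := mem_insert_self v A
  have hwS := mem_insert_of_mem (s := A) (b := v) hwA
  have hwv : w < v := hv w hwA
  have hvwvv : v * w < v * v := mul_lt_mul_right hwv v
  have hwvvv : w * v < v * v := mul_lt_mul_left hwv v
  have hvv := hnew v hvS v hvS (.inl hvwvv.le)
  have hvw := hnew v hvS w hwS (.inl le_rfl)
  have hwv' := hnew w hwS v hvS (.inr le_rfl)
  suffices 2 < #((S * S) \ (A * A)) by
    have := card_sdiff_add_card_eq_card hAA
    omega
  rw [two_lt_card_iff]
  simp only [not_and_or, not_forall, Commute, SemiconjBy] at h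
  obtain hne | ⟨a, ha, haw, hav⟩ := h
  · exact ⟨_, _, _, hvw, hwv', hvv, hne, hvwvv.ne, hwvvv.ne⟩
  have haw : a < w := (hw a ha).lt_of_ne haw
  rcases hav with hva | hav
  · exact ⟨_, _, _, mem_sdiff.2 ⟨mul_mem_mul hvS (mem_insert_of_mem ha), hva⟩, hvw, hvv,
      (mul_lt_mul_right haw v).ne, (mul_lt_mul_right (haw.trans hwv) v).ne, hvwvv.ne⟩
  · exact ⟨_, _, _, mem_sdiff.2 ⟨mul_mem_mul (mem_insert_of_mem ha) hvS, hav⟩, hwv', hvv,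
      (mul_lt_mul_left haw v).ne, (mul_lt_mul_left (haw.trans hwv) v).ne, hwvvv.ne⟩

theorem insert_subset_zpowCoset_of_forall_mul_mem {A : Finset G} {v w : G} (hwA : w ∈ A)
    (hw : ∀ a ∈ A, a ≤ w) (hwv : w < v) (hvw : Commute v w)
    (hA : ∀ a ∈ A, a ≠ w → v * a ∈ A * A ∧ a * v ∈ A * A) :
    ((insert v A : Finset G) : Set G) ⊆ zpowCoset (w⁻¹ * v) w := by
  have hδ : Commute (w⁻¹ * v) w := (Commute.refl w).inv_left.mul_left hvw
  have hv : v ∈ zpowCoset (w⁻¹ * v) w := ⟨1, by group⟩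
  refine coe_insert v A ▸ Set.insert_subset hv fun a ha => ?_
  refine (A.finite_toSet.wellFoundedOn (r := (· > ·))).induction ha fun a ha ih => ?_
  rcases (hw a ha).eq_or_lt with rfl | haw
  · exact ⟨0, by group⟩
  obtain ⟨hva, hav⟩ := hA a ha haw.ne
  obtain ⟨b, hb, c, hc, hbc⟩ := mem_mul.1 hva
  obtain ⟨b', hb', c', hc', hbc'⟩ := mem_mul.1 hav
  have hac : a < c := lt_of_not_ge fun hca =>
    (mul_le_mul' (hw b hb) hca).not_gt (hbc ▸ mul_lt_mul_left hwv a)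
  have hab' : a < b' := lt_of_not_ge fun hba =>
    (mul_le_mul' hba (hw c' hc')).not_gt (hbc' ▸ mul_lt_mul_right hwv a)
  by_cases hab : a < b
  · have := hδ.inv_mul_mul_mem_zpowCoset hv (ih b hb hab) (ih c hc hac)
    rwa [hbc, inv_mul_cancel_left] at this
  · -- `b ≤ a` and `c' ≤ a` would give `v * a = b * c ≤ a * w < a * v = b' * c' ≤ w * a < v * a`.
    have hac' : a < c' := lt_of_not_ge fun hca =>
      ((hbc ▸ mul_le_mul' (not_lt.1 hab) (hw c hc)).trans_lt (mul_lt_mul_right hwv a)).not_ge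
        ((hbc' ▸ mul_le_mul' (hw b' hb') hca).trans (mul_lt_mul_left hwv a).le)
    have := hδ.mul_mul_inv_mem_zpowCoset hv (ih b' hb' hab') (ih c' hc' hac')
    rwa [hbc', mul_inv_cancel_right] at this

theorem inCommutingCoset_or_three_mul_card_le (S : Finset G) (hS : 2 ≤ #S) :
    InCommutingCoset (S : Set G) ∨ 3 * #S ≤ #(S * S) + 3 := by
  induction S using Finset.induction_on_max with
  | empty => simp at hS
  | insert v A hv ih =>
    have hcard : #(insert v A) = #A + 1 := card_insert_of_notMem fun hvA => (hv v hvA).false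
    have hA : A.Nonempty := card_pos.1 (by omega)
    have hAA_ge := cauchy_davenport_mul_of_linearOrder_isCancelMul hA hA
    obtain hA1 | hA2 := lt_or_ge #A 2
    · have := cauchy_davenport_mul_of_linearOrder_isCancelMul (insert_nonempty v A)
        (insert_nonempty v A)
      right; omega
    obtain ⟨x, y, hxy, hAxy⟩ | hAA := ih hA2
    · by_cases hmem : ∃ a ∈ A, v * a ∈ A * A ∨ a * v ∈ A * A
      · obtain ⟨a, ha, hva⟩ := hmem
        exact .inl (InCommutingCoset.insert_of_mul_mem ⟨x, y, hxy, hAxy⟩ ha hva)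
      · push Not at hmem
        have := card_mul_add_card_insert_le hv fun a ha => (hmem a ha).1
        right; omega
    · set w := A.max' hA
      have hw : ∀ a ∈ A, a ≤ w := fun a ha => A.le_max' a ha
      by_cases hforce : Commute v w ∧ ∀ a ∈ A, a ≠ w → v * a ∈ A * A ∧ a * v ∈ A * A
      · exact .inl ⟨_, _, (Commute.refl w).inv_left.mul_left hforce.1,
          insert_subset_zpowCoset_of_forall_mul_mem (A.max'_mem hA) hw (hv w (A.max'_mem hA))
            hforce.1 hforce.2⟩
      · have := card_mul_add_three_le hv (A.max'_mem hA) hw hforce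
        right; omega

end Ordered

theorem stmt12 {G : Type*} [Group G] [LinearOrder G]
    [CovariantClass G G (· * ·) (· ≤ ·)]
    [CovariantClass G G (Function.swap (· * ·)) (· ≤ ·)]
    (S : Finset G) (hS : 3 ≤ S.card)
    (h : (S * S).card ≤ 3 * S.card - 4) :
    (∃ A : Finset G, A.card ≤ S.card - 1 ∧
        Subgroup.closure (A : Set G) = Subgroup.closure (S : Set G)) ∧
      ∃ x y : G, x * y = y * x ∧
        Subgroup.closure (S : Set G) ≤ Subgroup.closure {x, y} := by
  obtain ⟨x, y, hxy, hSxy⟩ : InCommutingCoset (S : Set G) :=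
    (inCommutingCoset_or_three_mul_card_le S (by omega)).resolve_right (by omega)
  obtain ⟨s₀, hs₀⟩ := card_pos.1 (by omega : 0 < #S)
  obtain ⟨g, hg⟩ := Subgroup.exists_closure_pair_eq_of_forall_inv_mul_mem_zpowers
    (mem_coe.2 hs₀) fun s hs => inv_mul_mem_zpowers_of_mem_zpowCoset (hSxy hs₀) (hSxy hs)
  refine ⟨⟨{s₀, g}, (card_insert_le _ _).trans (by rw [card_singleton]; omega), by simpa using hg⟩,
    x, y, hxy.eq, Subgroup.closure_le_closure_pair_of_subset_zpowCoset hSxy⟩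
end
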